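/- (Exactness of the Q-matrix for affine dynamics and quadratic costs, Section 5.2.) Let n, m, d be natural numbers, fix reference points x_r ∈ ℝⁿ, u_r ∈ ℝᵐ, w_r ∈ ℝᵈ and a point y₀ ∈ ℝⁿ. Let c ∈ ℝⁿ, let A be a real n×n matrix, B a real n×m matrix, E a real n×d matrix, R a symmetric real (1+n+m)×(1+n+m) matrix, and P a symmetric real (1+n)×(1+n) matrix. Define f(x,u,w) := c + A(x−x_r) + B(u−u_r) + E(w−w_r), f0(x,u) := ζ(x,u)ᵀ R ζ(x,u) where ζ(x,u) ∈ ℝ^{1+n+m} is the concatenation of 1, x−x_r, u−u_r, and Ṽ(y) := η(y)ᵀ P η(y) where η(y) ∈ ℝ^{1+n} is the concatenation of 1 and y−y₀. Let F be the ((1+n)+(1+n+m))×(1+n+m+d) real matrix whose row blocks, acting on the concatenation ξ(x,u,w) of 1, x−x_r, u−u_r, w−w_r, are: (1, 0, 0, 0); (c−y₀, A, B, E); (1, 0, 0, 0); (0, I_n, 0, 0); (0, 0, I_m, 0). Then for all x ∈ ℝⁿ, u ∈ ℝᵐ, w ∈ ℝᵈ: f0(x,u) + Ṽ(f(x,u,w))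 = ξ(x,u,w)ᵀ (Fᵀ D F) ξ(x,u,w), where D is the block-diagonal matrix with diagonal blocks P (of size 1+n) and R (of size 1+n+m). -/

import Mathlib

open Matrix

/-- Index type for the vector `ξ = (1, δx, δu, δw)` of size `1+n+m+d`. -/
abbrev XiIdx (n m d : ℕ) := Unit ⊕ (Fin n ⊕ (Fin m ⊕ Fin d))

/-- Index type for the vector `ζ = (1, δx, δu)` of size `1+n+m`. -/
abbrev ZetaIdx (n m : ℕ) := Unit ⊕ (Fin n ⊕ Fin m)

/-- Index type for the vector `η = (1, δy)` of size `1+n`. -/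
abbrev EtaIdx (n : ℕ) := Unit ⊕ Fin n

/-- The vector `ξ(x,u,w) = (1, x - x_r, u - u_r, w - w_r)`. -/
def xiVec {n m d : ℕ} (xr : Fin n → ℝ) (ur : Fin m → ℝ) (wr : Fin d → ℝ)
    (x : Fin n → ℝ) (u : Fin m → ℝ) (w : Fin d → ℝ) : XiIdx n m d → ℝ :=
  Sum.elim (fun _ => 1) (Sum.elim (x - xr) (Sum.elim (u - ur) (w - wr)))

/-- The vector `ζ(x,u) = (1, x - x_r, u - u_r)`. -/
def zetaVec {n m : ℕ} (xr : Fin n → ℝ) (ur : Fin m → ℝ)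
    (x : Fin n → ℝ) (u : Fin m → ℝ) : ZetaIdx n m → ℝ :=
  Sum.elim (fun _ => 1) (Sum.elim (x - xr) (u - ur))

/-- The vector `η(y) = (1, y - y₀)`. -/
def etaVec {n : ℕ} (y0 : Fin n → ℝ) (y : Fin n → ℝ) : EtaIdx n → ℝ :=
  Sum.elim (fun _ => 1) (y - y0)

/-- The `((1+n)+(1+n+m)) × (1+n+m+d)` matrix `F` with row blocks
`(1,0,0,0); (c-y₀, A, B, E); (1,0,0,0); (0,I_n,0,0); (0,0,I_m,0)`
acting on `ξ(x,u,w)`. -/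
def Fmat {n m d : ℕ} (y0 c : Fin n → ℝ) (A : Matrix (Fin n) (Fin n) ℝ)
    (B : Matrix (Fin n) (Fin m) ℝ) (E : Matrix (Fin n) (Fin d) ℝ) :
    Matrix (EtaIdx n ⊕ ZetaIdx n m) (XiIdx n m d) ℝ :=
  Matrix.of fun i j =>
    match i, j with
    | Sum.inl (Sum.inl _), Sum.inl _ => 1
    | Sum.inl (Sum.inl _), Sum.inr _ => 0
    | Sum.inl (Sum.inr p), Sum.inl _ => c p - y0 p
    | Sum.inl (Sum.inr p), Sum.inr (Sum.inl q) => A p q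
    | Sum.inl (Sum.inr p), Sum.inr (Sum.inr (Sum.inl q)) => B p q
    | Sum.inl (Sum.inr p), Sum.inr (Sum.inr (Sum.inr q)) => E p q
    | Sum.inr (Sum.inl _), Sum.inl _ => 1
    | Sum.inr (Sum.inl _), Sum.inr _ => 0
    | Sum.inr (Sum.inr (Sum.inl p)), Sum.inr (Sum.inl q) => if p = q then (1 : ℝ) else 0
    | Sum.inr (Sum.inr (Sum.inl _)), _ => 0
    | Sum.inr (Sum.inr (Sum.inr p)), Sum.inr (Sum.inr (Sum.inl q)) => if p = q then (1 : ℝ) else 0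
    | Sum.inr (Sum.inr (Sum.inr _)), _ => 0

/-! `F` is built so that `F ξ(x,u,w)` is the stacked vector `(η(f(x,u,w)), ζ(x,u))`. Hence
`ξᵀ (Fᵀ D F) ξ = (F ξ)ᵀ D (F ξ)`, and since `D = diag(P, R)` is block diagonal this splits into
`η(f)ᵀ P η(f) + ζᵀ R ζ = Ṽ(f(x,u,w)) + f0(x,u)`. -/

namespace Matrix

variable {ι κ α : Type*} [Fintype ι] [Fintype κ]

theorem dotProduct_transpose_mul_mul_mulVec [CommSemiring α] (F : Matrix ι κ α)
    (D : Matrix ι ι α) (v : κ → α) :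
    v ⬝ᵥ (Fᵀ * D * F) *ᵥ v = F *ᵥ v ⬝ᵥ D *ᵥ (F *ᵥ v) := by
  rw [Matrix.mul_assoc, ← mulVec_mulVec, ← mulVec_mulVec, dotProduct_mulVec, vecMul_transpose]

theorem sumElim_dotProduct_fromBlocks_zero_zero_mulVec_sumElim [NonUnitalNonAssocSemiring α]
    (P : Matrix ι ι α) (R : Matrix κ κ α) (a : ι → α) (b : κ → α) :
    Sum.elim a b ⬝ᵥ fromBlocks P 0 0 R *ᵥ Sum.elim a b = a ⬝ᵥ P *ᵥ a + b ⬝ᵥ R *ᵥ b := by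
  simp only [fromBlocks_mulVec, Sum.elim_comp_inl, Sum.elim_comp_inr, zero_mulVec, add_zero,
    zero_add, sumElim_dotProduct_sumElim]

end Matrix

theorem Fmat_mulVec_xiVec {n m d : ℕ} (xr : Fin n → ℝ) (ur : Fin m → ℝ) (wr : Fin d → ℝ)
    (y0 c : Fin n → ℝ) (A : Matrix (Fin n) (Fin n) ℝ) (B : Matrix (Fin n) (Fin m) ℝ)
    (E : Matrix (Fin n) (Fin d) ℝ) (x : Fin n → ℝ) (u : Fin m → ℝ) (w : Fin d → ℝ) :
    Fmat y0 c A B E *ᵥ xiVec xr ur wr x u w =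
      Sum.elim (etaVec y0 (c + A *ᵥ (x - xr) + B *ᵥ (u - ur) + E *ᵥ (w - wr)))
        (zetaVec xr ur x u) := by
  funext i
  rcases i with (_ | p) | (_ | p | p) <;>
    simp [mulVec, dotProduct, Fintype.sum_sum_type, Fmat, xiVec, etaVec, zetaVec]
  ring

theorem exact_Q_matrix_general
    (n m d : ℕ)
    (xr : Fin n → ℝ) (ur : Fin m → ℝ) (wr : Fin d → ℝ) (y0 : Fin n → ℝ)
    (c : Fin n → ℝ)
    (A : Matrix (Fin n) (Fin n) ℝ) (B : Matrix (Fin n) (Fin m) ℝ)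
    (E : Matrix (Fin n) (Fin d) ℝ)
    (R : Matrix (ZetaIdx n m) (ZetaIdx n m) ℝ)
    (P : Matrix (EtaIdx n) (EtaIdx n) ℝ) :
    ∀ (x : Fin n → ℝ) (u : Fin m → ℝ) (w : Fin d → ℝ),
      zetaVec xr ur x u ⬝ᵥ R.mulVec (zetaVec xr ur x u) +
        etaVec y0 (c + A.mulVec (x - xr) + B.mulVec (u - ur) + E.mulVec (w - wr)) ⬝ᵥ
          P.mulVec
            (etaVec y0 (c + A.mulVec (x - xr) + B.mulVec (u - ur) + E.mulVec (w - wr))) =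
      xiVec xr ur wr x u w ⬝ᵥ
        ((Fmat y0 c A B E)ᵀ * fromBlocks P 0 0 R * Fmat y0 c A B E).mulVec
          (xiVec xr ur wr x u w) := by
  intro x u w
  rw [dotProduct_transpose_mul_mul_mulVec, Fmat_mulVec_xiVec,
    sumElim_dotProduct_fromBlocks_zero_zero_mulVec_sumElim, add_comm]

/-- **Exactness of the Q-matrix for affine dynamics and quadratic costs**
(Section 5.2 of the paper): for affine dynamics `f`, quadratic stage cost `f0`
and quadratic value-function approximation `Ṽ`, the composed quadratic
Q-function is exactly the quadratic form of `FᵀDF` with `D = diag(P, R)`. -/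
theorem exact_Q_matrix
    (n m d : ℕ)
    (xr : Fin n → ℝ) (ur : Fin m → ℝ) (wr : Fin d → ℝ) (y0 : Fin n → ℝ)
    (c : Fin n → ℝ)
    (A : Matrix (Fin n) (Fin n) ℝ) (B : Matrix (Fin n) (Fin m) ℝ)
    (E : Matrix (Fin n) (Fin d) ℝ)
    (R : Matrix (ZetaIdx n m) (ZetaIdx n m) ℝ) (hR : R.IsSymm)
    (P : Matrix (EtaIdx n) (EtaIdx n) ℝ) (hP : P.IsSymm) :
    ∀ (x : Fin n → ℝ) (u : Fin m → ℝ) (w : Fin d → ℝ),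
      zetaVec xr ur x u ⬝ᵥ R.mulVec (zetaVec xr ur x u) +
        etaVec y0 (c + A.mulVec (x - xr) + B.mulVec (u - ur) + E.mulVec (w - wr)) ⬝ᵥ
          P.mulVec
            (etaVec y0 (c + A.mulVec (x - xr) + B.mulVec (u - ur) + E.mulVec (w - wr))) =
      xiVec xr ur wr x u w ⬝ᵥ
        ((Fmat y0 c A B E)ᵀ * fromBlocks P 0 0 R * Fmat y0 c A B E).mulVec
          (xiVec xr ur wr x u w) :=
  exact_Q_matrix_general n m d xr ur wr y0 c A B E R P
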